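/- Let P₁,…,Pₘ be induced-hereditary graph properties, let P = P₁∘⋯∘Pₘ, and let G be a P-strict graph. Then for every (P₁,…,Pₘ)-partition (V₁,…,Vₘ) of G and every i, the induced subgraph G[Vᵢ] is Pᵢ-strict; in particular every Vᵢ is nonempty. -/

import Mathlib

/-!  Common framework: finite simple graphs on finite subsets of `ℕ`,
graph properties, `(P₁,…,Pₙ)`-partitions, products of properties,
`P`-decompositions, strict graphs, decomposability numbers, generating
sets, *-joins of copies, and the respecting notions from the paper. -/

/-- A finite simple graph on a finite vertex set of natural numbers. -/
structure NGraph where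
  verts : Finset ℕ
  Adj : ℕ → ℕ → Prop
  symm : ∀ a b, Adj a b → Adj b a
  loopless : ∀ a, ¬Adj a a
  mem_of_adj : ∀ a b, Adj a b → a ∈ verts ∧ b ∈ verts

/-- The null graph `K₀` (no vertices). -/
def nullGraph : NGraph where
  verts := ∅
  Adj _ _ := False
  symm _ _ h := h.elim
  loopless _ h := h
  mem_of_adj _ _ h := h.elim

namespace NGraph

/-- The subgraph of `G` induced by the vertex set `U`. -/
def induce (G : NGraph) (U : Finset ℕ) : NGraph where
  verts := G.verts ∩ U
  Adj a b := G.Adj a b ∧ a ∈ U ∧ b ∈ U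
  symm a b h := ⟨G.symm a b h.1, h.2.2, h.2.1⟩
  loopless a h := G.loopless a h.1
  mem_of_adj a b h := ⟨Finset.mem_inter.2 ⟨(G.mem_of_adj a b h.1).1, h.2.1⟩,
    Finset.mem_inter.2 ⟨(G.mem_of_adj a b h.1).2, h.2.2⟩⟩

/-- `φ` is an isomorphism from `G` onto `H`. -/
def IsoVia (G H : NGraph) (φ : ℕ → ℕ) : Prop :=
  Set.BijOn φ (G.verts : Set ℕ) (H.verts : Set ℕ) ∧
    ∀ a ∈ G.verts, ∀ b ∈ G.verts, (G.Adj a b ↔ H.Adj (φ a) (φ b))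

/-- `G` and `H` are isomorphic. -/
def Iso (G H : NGraph) : Prop := ∃ φ, G.IsoVia H φ

/-- `H ≤ G` : `H` is isomorphic to an induced subgraph of `G`. -/
def Le (H G : NGraph) : Prop := ∃ U ⊆ G.verts, H.Iso (G.induce U)

end NGraph

/-- `K` is the disjoint union of the family `C` of graphs. -/
def IsDisjUnion {k : ℕ} (K : NGraph) (C : Fin k → NGraph) : Prop :=
  (∀ i j, i ≠ j → Disjoint (C i).verts (C j).verts) ∧
  K.verts = Finset.univ.biUnion (fun j => (C j).verts) ∧
  ∀ a b, K.Adj a b ↔ ∃ j, (C j).Adj a b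

/-- `kG₀` : the set of graphs that are disjoint unions of `k` copies of `G₀`. -/
def kCopies (k : ℕ) (G₀ : NGraph) : Set NGraph :=
  {K | ∃ C : Fin k → NGraph, (∀ j, (C j).Iso G₀) ∧ IsDisjUnion K C}

/-- The *-join `G₁ * ⋯ * Gₙ` of a family of graphs (with pairwise disjoint
vertex sets): all graphs on the union of the vertex sets inducing each `Gᵢ`,
so that only edges joining distinct `Gᵢ`'s may be added. -/
def StarJoin {n : ℕ} (Gs : Fin n → NGraph) : Set NGraph :=
  {H | H.verts = Finset.univ.biUnion (fun i => (Gs i).verts) ∧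
    ∀ i, ∀ a ∈ (Gs i).verts, ∀ b ∈ (Gs i).verts, (H.Adj a b ↔ (Gs i).Adj a b)}

/-- `G * K₁` : the graphs obtained from `G` by adding one new vertex joined
arbitrarily to `G`. -/
def joinOne (G : NGraph) : Set NGraph :=
  {H | ∃ v, v ∉ G.verts ∧ H.verts = insert v G.verts ∧
    ∀ a ∈ G.verts, ∀ b ∈ G.verts, (H.Adj a b ↔ G.Adj a b)}

/-- A graph property: a nonempty isomorphism-closed class of graphs (it
contains the null graph, which by convention belongs to every property, and
some graph with at least one vertex). -/
def IsProperty (P : Set NGraph) : Prop :=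
  nullGraph ∈ P ∧ (∃ G ∈ P, G.verts.Nonempty) ∧
    ∀ G H, NGraph.Iso G H → G ∈ P → H ∈ P

/-- `P` is induced-hereditary. -/
def IndHer (P : Set NGraph) : Prop := ∀ G H, G ∈ P → NGraph.Le H G → H ∈ P

/-- `P` is additive: closed under disjoint unions. -/
def Additive' (P : Set NGraph) : Prop :=
  ∀ G H K : NGraph, G ∈ P → H ∈ P → IsDisjUnion K ![G, H] → K ∈ P

/-- An additive induced-hereditary graph property. -/
def IsAIH (P : Set NGraph) : Prop := IsProperty P ∧ IndHer P ∧ Additive' P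

/-- A `(P₁,…,Pₙ)`-partition of `G` (parts may be empty). -/
def IsPartitionInto {n : ℕ} (Ps : Fin n → Set NGraph) (G : NGraph)
    (V : Fin n → Finset ℕ) : Prop :=
  (∀ i j, i ≠ j → Disjoint (V i) (V j)) ∧
  Finset.univ.biUnion V = G.verts ∧
  ∀ i, G.induce (V i) ∈ Ps i

/-- The product `P₁ ∘ ⋯ ∘ Pₙ` of properties. -/
def ProdProp {n : ℕ} (Ps : Fin n → Set NGraph) : Set NGraph :=
  {G | ∃ V : Fin n → Finset ℕ, IsPartitionInto Ps G V}

/-- A `P`-decomposition of `G` with parts `V` : the parts are nonempty and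
partition `V(G)`, and for every `k ≥ 1` every graph in
`kG[V₁] * ⋯ * kG[Vₙ]` belongs to `P`. -/
def IsDecomp (P : Set NGraph) (G : NGraph) {n : ℕ} (V : Fin n → Finset ℕ) : Prop :=
  (∀ i, (V i).Nonempty) ∧
  (∀ i j, i ≠ j → Disjoint (V i) (V j)) ∧
  Finset.univ.biUnion V = G.verts ∧
  ∀ k : ℕ, 0 < k → ∀ A : Fin n → NGraph,
    (∀ i, A i ∈ kCopies k (G.induce (V i))) →
    (∀ i j, i ≠ j → Disjoint (A i).verts (A j).verts) →
    ∀ H ∈ StarJoin A, H ∈ P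

/-- `dec_P(G)` : the maximum number of parts of a `P`-decomposition of `G`
(`0` if there is none). -/
noncomputable def decP (P : Set NGraph) (G : NGraph) : ℕ :=
  sSup {n | ∃ V : Fin n → Finset ℕ, IsDecomp P G V}

/-- `G` is `P`-strict : `G ∈ P` but some graph in `G * K₁` is not in `P`. -/
def Strict (P : Set NGraph) (G : NGraph) : Prop :=
  G ∈ P ∧ ∃ H ∈ joinOne G, H ∉ P

/-- `dec(P) = min { dec_P(G) : G ∈ S(P) }`. -/
noncomputable def decOf (P : Set NGraph) : ℕ :=
  sInf (decP P '' {G | Strict P G})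

/-- `dec_P(𝒢) = min { dec_P(G) : G ∈ 𝒢 }`. -/
noncomputable def decSet (P 𝒢 : Set NGraph) : ℕ := sInf (decP P '' 𝒢)

/-- `⟨𝒢⟩` : the induced-hereditary property generated by `𝒢`. -/
def gen (𝒢 : Set NGraph) : Set NGraph := {G | ∃ H ∈ 𝒢, NGraph.Le G H}

/-- `𝒢` is a generating set for `P`. -/
def Generates (𝒢 P : Set NGraph) : Prop := gen 𝒢 = P

/-- `G` is uniquely `P`-decomposable: it has exactly one `P`-decomposition
(as an unordered partition) with `dec_P(G)` parts. -/
def UniquelyDecomposable (P : Set NGraph) (G : NGraph) : Prop :=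
  (∃ V : Fin (decP P G) → Finset ℕ, IsDecomp P G V) ∧
  ∀ V W : Fin (decP P G) → Finset ℕ, IsDecomp P G V → IsDecomp P G W →
    ∃ σ : Equiv.Perm (Fin (decP P G)), ∀ i, W i = V (σ i)

/-- Data exhibiting `Gstar` as a member of `s ⊛ G` : `s` pairwise disjoint
copies of `G` (given by isomorphisms) whose *-join contains `Gstar`. -/
structure CopyJoin (G : NGraph) (s : ℕ) (Gstar : NGraph) where
  copies : Fin s → NGraph
  maps : Fin s → ℕ → ℕ
  iso : ∀ k, G.IsoVia (copies k) (maps k)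
  disj : ∀ k l, k ≠ l → Disjoint (copies k).verts (copies l).verts
  mem : Gstar ∈ StarJoin copies

/-- `Gstar ∈ s ⊛ G` respects `d₀ = (U₁,…,Uₘ)` : every added edge between two
different copies of `G` meets (copies of) two different `Uⱼ`'s, i.e. there is
no edge between the copies of the same `Uⱼ` in two different copies of `G`. -/
def CopyJoin.RespectsJoin {G : NGraph} {s : ℕ} {Gstar : NGraph}
    (cj : CopyJoin G s Gstar) {m : ℕ} (U : Fin m → Finset ℕ) : Prop :=
  ∀ k l : Fin s, k ≠ l → ∀ j : Fin m, ∀ a ∈ (U j).image (cj.maps k),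
    ∀ b ∈ (U j).image (cj.maps l), ¬Gstar.Adj a b

/-- A partition `V` of `Gstar ∈ s ⊛ G` respects `d₀ = (U₁,…,Uₘ)` uniformly:
for each part `Vᵢ` there is a single `Uⱼ` such that in every copy `Gᵏ`,
`Vᵢ ∩ V(Gᵏ)` is contained in the copy of `Uⱼ`. -/
def CopyJoin.RespectsUniformly {G : NGraph} {s : ℕ} {Gstar : NGraph}
    (cj : CopyJoin G s Gstar) {n m : ℕ}
    (V : Fin n → Finset ℕ) (U : Fin m → Finset ℕ) : Prop :=
  ∀ i, ∃ j, ∀ k, V i ∩ (cj.copies k).verts ⊆ (U j).image (cj.maps k)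

/-- An irreducible additive induced-hereditary property: one that is not the
product of two additive induced-hereditary properties. -/
def IrredProp (P : Set NGraph) : Prop :=
  IsAIH P ∧ ¬∃ Q R : Set NGraph, IsAIH Q ∧ IsAIH R ∧ P = ProdProp ![Q, R]

/-! If `G[Vᵢ]` were not `Pᵢ`-strict, then for every `H ∈ G * K₁` adding the new vertex to `Vᵢ`
would give a `(P₁,…,Pₘ)`-partition of `H`, so `G` would not be `P`-strict. A `Pᵢ`-strict graph
is nonempty, because every one-vertex graph is an induced subgraph of some graph of `Pᵢ`. -/

namespace NGraph

theorem ext {G H : NGraph} (hv : G.verts = H.verts) (ha : G.Adj = H.Adj) : G = H := by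
  cases G; cases H; cases hv; cases ha; rfl

theorem iso_of_verts_eq_singleton {G H : NGraph} {a b : ℕ} (hG : G.verts = {a})
    (hH : H.verts = {b}) : G.Iso H := by
  refine ⟨fun _ => b, ?_, ?_⟩
  · rw [hG, hH, Finset.coe_singleton, Finset.coe_singleton]
    exact ⟨Set.mapsTo_singleton.2 rfl, Set.injOn_singleton _ _,
      Set.surjOn_singleton.2 ⟨a, rfl, rfl⟩⟩
  · intro x hx y hy
    rw [hG, Finset.mem_singleton] at hx hy
    subst hx hy
    exact iff_of_false (G.loopless _) (H.loopless _)

theorem induce_verts_of_subset (G : NGraph) {U : Finset ℕ} (hU : U ⊆ G.verts) :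
    (G.induce U).verts = U :=
  Finset.inter_eq_right.2 hU

theorem induce_eq_of_mem_joinOne {G H : NGraph} (hH : H ∈ joinOne G) {U : Finset ℕ}
    (hU : U ⊆ G.verts) : H.induce U = G.induce U := by
  obtain ⟨v, -, hHv, hadj⟩ := hH
  have hUH : U ⊆ H.verts := hHv ▸ hU.trans (Finset.subset_insert v G.verts)
  refine ext ?_ ?_
  · rw [H.induce_verts_of_subset hUH, G.induce_verts_of_subset hU]
  · ext a b
    exact and_congr_left fun ⟨ha, hb⟩ => hadj a (hU ha) b (hU hb)

theorem induce_insert_mem_joinOne {G H : NGraph} {v : ℕ} (hv : v ∉ G.verts)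
    (hHv : H.verts = insert v G.verts)
    (hadj : ∀ a ∈ G.verts, ∀ b ∈ G.verts, (H.Adj a b ↔ G.Adj a b)) (U : Finset ℕ) :
    H.induce (insert v U) ∈ joinOne (G.induce U) := by
  refine ⟨v, fun h => hv (Finset.mem_inter.1 h).1, ?_, ?_⟩
  · simp only [induce, hHv, ← Finset.insert_inter_distrib]
  · intro a ha b hb
    obtain ⟨haG, haU⟩ := Finset.mem_inter.1 ha
    obtain ⟨hbG, hbU⟩ := Finset.mem_inter.1 hb
    simp only [induce, Finset.mem_insert, haU, hbU, or_true, and_true]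
    exact hadj a haG b hbG

end NGraph

theorem mem_of_verts_eq_singleton {P : Set NGraph} (hP : IsProperty P) (hher : IndHer P)
    {H : NGraph} {w : ℕ} (hH : H.verts = {w}) : H ∈ P := by
  obtain ⟨-, ⟨G₀, hG₀, u, hu⟩, -⟩ := hP
  have hu' : {u} ⊆ G₀.verts := Finset.singleton_subset_iff.2 hu
  exact hher G₀ H hG₀
    ⟨{u}, hu', NGraph.iso_of_verts_eq_singleton hH (G₀.induce_verts_of_subset hu')⟩

theorem Strict.verts_nonempty {P : Set NGraph} (hP : IsProperty P) (hher : IndHer P)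
    {G : NGraph} (hG : Strict P G) : G.verts.Nonempty := by
  obtain ⟨-, H, ⟨w, -, hHw, -⟩, hHP⟩ := hG
  by_contra hempty
  rw [Finset.not_nonempty_iff_eq_empty] at hempty
  exact hHP (mem_of_verts_eq_singleton hP hher (by rw [hHw, hempty]; rfl))

theorem biUnion_update_insert {m : ℕ} (V : Fin m → Finset ℕ) (i : Fin m) (v : ℕ) :
    Finset.univ.biUnion (Function.update V i (insert v (V i))) =
      insert v (Finset.univ.biUnion V) := by
  ext a
  simp only [Finset.mem_biUnion, Finset.mem_univ, true_and, Finset.mem_insert]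
  constructor
  · rintro ⟨j, hj⟩
    rcases eq_or_ne j i with rfl | hji
    · simp only [Function.update_self, Finset.mem_insert] at hj
      exact hj.imp_right fun h => ⟨j, h⟩
    · exact Or.inr ⟨j, by simpa [hji] using hj⟩
  · rintro (rfl | ⟨j, hj⟩)
    · exact ⟨i, by simp⟩
    · rcases eq_or_ne j i with rfl | hji
      · exact ⟨j, by simp [hj]⟩
      · exact ⟨j, by simpa [hji] using hj⟩

theorem pairwise_disjoint_update_insert {m : ℕ} {V : Fin m → Finset ℕ}
    (hV : ∀ j k, j ≠ k → Disjoint (V j) (V k)) (i : Fin m) {v : ℕ} (hv : ∀ j, v ∉ V j) :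
    ∀ j k, j ≠ k → Disjoint (Function.update V i (insert v (V i)) j)
      (Function.update V i (insert v (V i)) k) := by
  intro j k hjk
  rcases eq_or_ne j i with rfl | hji
  · simpa [hjk.symm, hv k] using hV j k hjk
  · rcases eq_or_ne k i with rfl | hki
    · simpa [hji, hv j] using hV j k hjk
    · simpa [hji, hki] using hV j k hjk

theorem mem_prodProp_of_mem_joinOne {m : ℕ} {Ps : Fin m → Set NGraph} {G H : NGraph}
    (hH : H ∈ joinOne G) {V : Fin m → Finset ℕ} (hV : IsPartitionInto Ps G V) (i : Fin m)
    (hi : ∀ H' ∈ joinOne (G.induce (V i)), H' ∈ Ps i) : H ∈ ProdProp Ps := by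
  obtain ⟨hdisj, hunion, hparts⟩ := hV
  obtain ⟨v, hvG, hHv, hadj⟩ := hH
  have hVG : ∀ j, V j ⊆ G.verts := fun j a ha =>
    hunion ▸ Finset.mem_biUnion.2 ⟨j, Finset.mem_univ j, ha⟩
  have hvV : ∀ j, v ∉ V j := fun j hj => hvG (hVG j hj)
  refine ⟨Function.update V i (insert v (V i)),
    pairwise_disjoint_update_insert hdisj i hvV,
    by rw [biUnion_update_insert, hunion, hHv], fun j => ?_⟩
  rcases eq_or_ne j i with rfl | hji
  · rw [Function.update_self]
    exact hi _ (NGraph.induce_insert_mem_joinOne hvG hHv hadj (V j))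
  · rw [Function.update_of_ne hji,
      NGraph.induce_eq_of_mem_joinOne ⟨v, hvG, hHv, hadj⟩ (hVG j)]
    exact hparts j

theorem Strict.induce_of_isPartitionInto {m : ℕ} {Ps : Fin m → Set NGraph} {G : NGraph}
    (hG : Strict (ProdProp Ps) G) {V : Fin m → Finset ℕ} (hV : IsPartitionInto Ps G V)
    (i : Fin m) : Strict (Ps i) (G.induce (V i)) := by
  obtain ⟨-, H, hH, hHP⟩ := hG
  refine ⟨hV.2.2 i, ?_⟩
  by_contra! hi
  exact hHP (mem_prodProp_of_mem_joinOne hH hV i hi)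

theorem statement1 (m : ℕ) (Ps : Fin m → Set NGraph)
    (hprop : ∀ i, IsProperty (Ps i)) (hher : ∀ i, IndHer (Ps i))
    (G : NGraph) (hG : Strict (ProdProp Ps) G)
    (V : Fin m → Finset ℕ) (hV : IsPartitionInto Ps G V) (i : Fin m) :
    Strict (Ps i) (G.induce (V i)) ∧ (V i).Nonempty := by
  have hstrict := hG.induce_of_isPartitionInto hV i
  obtain ⟨a, ha⟩ := hstrict.verts_nonempty (hprop i) (hher i)
  exact ⟨hstrict, a, (Finset.mem_inter.1 ha).2⟩
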